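/- Let (X, μ) be a measure space, E a real inner product space, and r ≥ 1 a real number. If f, g : X → E are measurable with ‖f‖_{L^{r+1}(μ)} < ∞ and ‖g‖_{L^{r+1}(μ)} < ∞, then the function x ↦ ‖f(x)‖^(r-1)·f(x) − ‖g(x)‖^(r-1)·g(x) satisfies ‖ ‖f‖^(r-1)f − ‖g‖^(r-1)g ‖_{L^{(r+1)/r}(μ)} ≤ r · (‖f‖_{L^{r+1}(μ)} + ‖g‖_{L^{r+1}(μ)})^(r-1) · ‖f − g‖_{L^{r+1}(μ)}. -/

import Mathlib

/-!
Writing `C(u) = ‖u‖^(r-1) • u` and assuming `‖b‖ ≤ ‖a‖`, split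
`C(a) - C(b) = ‖a‖^(r-1) • (a - b) + (‖a‖^(r-1) - ‖b‖^(r-1)) • b`; weighted AM-GM bounds the
second term by `(r - 1) ‖a‖^(r-1) ‖a - b‖`, so pointwise
`‖C(f) - C(g)‖ ≤ r (‖f‖ + ‖g‖)^(r-1) ‖f - g‖`. Hölder's inequality with
`r / (r + 1) = (r - 1) / (r + 1) + 1 / (r + 1)` and Minkowski's inequality for `‖f‖ + ‖g‖`
turn this into the `L^p` estimate.
-/

open MeasureTheory

lemma rpow_sub_rpow_mul_le {p s t : ℝ} (hp : 0 ≤ p) (hs : 0 ≤ s) (ht : 0 ≤ t) :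
    (s ^ p - t ^ p) * t ≤ p * s ^ p * (s - t) := by
  have hp1 : 0 < p + 1 := by linarith
  -- weighted AM-GM for `s ^ (p + 1)` and `t ^ (p + 1)` with weights `p / (p + 1)`, `1 / (p + 1)`
  have amgm := Real.geom_mean_le_arith_mean2_weighted (by positivity) (by positivity)
    (Real.rpow_nonneg hs (p + 1)) (Real.rpow_nonneg ht (p + 1))
    (by field_simp : p / (p + 1) + 1 / (p + 1) = 1)
  rw [← Real.rpow_mul hs, ← Real.rpow_mul ht, mul_div_cancel₀ _ hp1.ne',
    mul_one_div_cancel hp1.ne', Real.rpow_one, Real.rpow_add_one' hs hp1.ne',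
    Real.rpow_add_one' ht hp1.ne'] at amgm
  have key : (p + 1) * (s ^ p * t) ≤ p * (s ^ p * s) + t ^ p * t := by
    have := mul_le_mul_of_nonneg_left amgm hp1.le
    field_simp at this
    linarith
  linarith

lemma norm_rpow_smul_sub_rpow_smul_le {E : Type*} [NormedAddCommGroup E] [NormedSpace ℝ E]
    {p : ℝ} (hp : 0 ≤ p) (a b : E) :
    ‖‖a‖ ^ p • a - ‖b‖ ^ p • b‖ ≤ (p + 1) * (‖a‖ + ‖b‖) ^ p * ‖a - b‖ := by
  wlog hba : ‖b‖ ≤ ‖a‖ generalizing a b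
  · simpa only [norm_sub_rev, add_comm ‖b‖] using this b a (le_of_not_ge hba)
  have hpow : ‖b‖ ^ p ≤ ‖a‖ ^ p := by gcongr
  calc ‖‖a‖ ^ p • a - ‖b‖ ^ p • b‖
      = ‖‖a‖ ^ p • (a - b) + (‖a‖ ^ p - ‖b‖ ^ p) • b‖ := by
        rw [smul_sub, sub_smul, sub_add_sub_cancel]
    _ ≤ ‖a‖ ^ p * ‖a - b‖ + (‖a‖ ^ p - ‖b‖ ^ p) * ‖b‖ := by
        refine (norm_add_le _ _).trans_eq ?_
        rw [norm_smul, norm_smul, Real.norm_of_nonneg (by positivity),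
          Real.norm_of_nonneg (sub_nonneg.mpr hpow)]
    _ ≤ ‖a‖ ^ p * ‖a - b‖ + p * ‖a‖ ^ p * (‖a‖ - ‖b‖) := by
        grw [rpow_sub_rpow_mul_le hp (norm_nonneg a) (norm_nonneg b)]
    _ ≤ ‖a‖ ^ p * ‖a - b‖ + p * ‖a‖ ^ p * ‖a - b‖ := by
        gcongr; exact norm_sub_norm_le a b
    _ = (p + 1) * ‖a‖ ^ p * ‖a - b‖ := by ring
    _ ≤ (p + 1) * (‖a‖ + ‖b‖) ^ p * ‖a - b‖ := by
        gcongr; linarith [norm_nonneg b]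

section Lp

variable {X : Type*} [MeasurableSpace X] {μ : Measure X}
  {E G : Type*} [NormedAddCommGroup E] [NormedSpace ℝ E] [NormedAddCommGroup G]

lemma eLpNorm_norm_rpow_smul_le {F : X → G} {h : X → E} {p q : ℝ} (hp : 0 < p) (hq : 0 < q)
    (hF : AEStronglyMeasurable F μ) (hh : AEStronglyMeasurable h μ) :
    eLpNorm (fun x => ‖F x‖ ^ p • h x) (ENNReal.ofReal (q / (p + 1))) μ
      ≤ eLpNorm F (ENNReal.ofReal q) μ ^ p * eLpNorm h (ENNReal.ofReal q) μ := by
  have : ENNReal.HolderTriple (ENNReal.ofReal (q / p)) (ENNReal.ofReal q)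
      (ENNReal.ofReal (q / (p + 1))) := by
    constructor
    rw [← ENNReal.ofReal_inv_of_pos (by positivity), ← ENNReal.ofReal_inv_of_pos hq,
      ← ENNReal.ofReal_inv_of_pos (by positivity), ← ENNReal.ofReal_add (by positivity)
        (by positivity)]
    congr 1
    field_simp
  have hφ : AEStronglyMeasurable (fun x => ‖F x‖ ^ p) μ :=
    (Real.continuous_rpow_const hp.le).comp_aestronglyMeasurable hF.norm
  refine (eLpNorm_smul_le_mul_eLpNorm (p := ENNReal.ofReal (q / p)) (q := ENNReal.ofReal q)
    hh hφ).trans_eq ?_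
  rw [eLpNorm_norm_rpow F hp, ← ENNReal.ofReal_mul (by positivity), div_mul_cancel₀ _ hp.ne']

lemma eLpNorm_norm_add_norm_le {f g : X → G} {q : ENNReal} (hq : 1 ≤ q)
    (hf : AEStronglyMeasurable f μ) (hg : AEStronglyMeasurable g μ) :
    eLpNorm (fun x => ‖f x‖ + ‖g x‖) q μ ≤ eLpNorm f q μ + eLpNorm g q μ :=
  (eLpNorm_add_le hf.norm hg.norm hq).trans_eq (by rw [eLpNorm_norm, eLpNorm_norm])

end Lp

theorem forchheimer_Lp_lipschitz_general
    {X : Type*} [MeasurableSpace X] (μ : Measure X)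
    {E : Type*} [NormedAddCommGroup E] [InnerProductSpace ℝ E]
    (r : ℝ) (hr : 1 ≤ r) (f g : X → E)
    (hf : AEStronglyMeasurable f μ) (hg : AEStronglyMeasurable g μ) :
    eLpNorm (fun x => (‖f x‖ ^ (r - 1) : ℝ) • f x - (‖g x‖ ^ (r - 1) : ℝ) • g x)
        (ENNReal.ofReal ((r + 1) / r)) μ
      ≤ ENNReal.ofReal r
          * (eLpNorm f (ENNReal.ofReal (r + 1)) μ
              + eLpNorm g (ENNReal.ofReal (r + 1)) μ) ^ (r - 1)
          * eLpNorm (f - g) (ENNReal.ofReal (r + 1)) μ := by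
  obtain rfl | hr1 := hr.eq_or_lt
  · norm_num [Pi.sub_def]
  set F := fun x => ‖f x‖ + ‖g x‖
  have hpointwise : ∀ x, ‖‖f x‖ ^ (r - 1) • f x - ‖g x‖ ^ (r - 1) • g x‖
      ≤ r * ‖‖F x‖ ^ (r - 1) • (f - g) x‖ := fun x => by
    have hF : 0 ≤ F x := by positivity
    rw [norm_smul, Real.norm_of_nonneg (by positivity), Real.norm_of_nonneg hF, ← mul_assoc]
    simpa using norm_rpow_smul_sub_rpow_smul_le (sub_nonneg.mpr hr) (f x) (g x)
  calc _ ≤ ENNReal.ofReal r * eLpNorm (fun x => ‖F x‖ ^ (r - 1) • (f - g) x)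
          (ENNReal.ofReal ((r + 1) / (r - 1 + 1))) μ := by
        rw [sub_add_cancel]
        exact eLpNorm_le_mul_eLpNorm_of_ae_le_mul (.of_forall hpointwise) _
    _ ≤ ENNReal.ofReal r * (eLpNorm F (ENNReal.ofReal (r + 1)) μ ^ (r - 1)
          * eLpNorm (f - g) (ENNReal.ofReal (r + 1)) μ) := by
        gcongr
        exact eLpNorm_norm_rpow_smul_le (by linarith) (by linarith)
          (hf.norm.add hg.norm) (hf.sub hg)
    _ ≤ _ := by
        rw [← mul_assoc]
        gcongr
        exact eLpNorm_norm_add_norm_le (ENNReal.one_le_ofReal.mpr (by linarith)) hf hg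

/-- Local Lipschitz estimate (2.13) for the Forchheimer nonlinearity
`C_r(u) = ‖u‖^(r-1) • u` from `L^{r+1}(μ)` into `L^{(r+1)/r}(μ)`: for `r ≥ 1`
and `f, g` measurable with finite `L^{r+1}` norms,
`‖C_r(f) - C_r(g)‖_{L^{(r+1)/r}} ≤ r (‖f‖_{L^{r+1}} + ‖g‖_{L^{r+1}})^{r-1} ‖f - g‖_{L^{r+1}}`. -/
theorem forchheimer_Lp_lipschitz
    {X : Type*} [MeasurableSpace X] (μ : Measure X)
    {E : Type*} [NormedAddCommGroup E] [InnerProductSpace ℝ E]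
    (r : ℝ) (hr : 1 ≤ r) (f g : X → E)
    (hf : AEStronglyMeasurable f μ) (hg : AEStronglyMeasurable g μ)
    (hf' : eLpNorm f (ENNReal.ofReal (r + 1)) μ < ⊤)
    (hg' : eLpNorm g (ENNReal.ofReal (r + 1)) μ < ⊤) :
    eLpNorm (fun x => (‖f x‖ ^ (r - 1) : ℝ) • f x - (‖g x‖ ^ (r - 1) : ℝ) • g x)
        (ENNReal.ofReal ((r + 1) / r)) μ
      ≤ ENNReal.ofReal r
          * (eLpNorm f (ENNReal.ofReal (r + 1)) μ
              + eLpNorm g (ENNReal.ofReal (r + 1)) μ) ^ (r - 1)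
          * eLpNorm (f - g) (ENNReal.ofReal (r + 1)) μ :=
  forchheimer_Lp_lipschitz_general μ r hr f g hf hg
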